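/- arXiv:2006.12308 — 4 statements merged into one kernel-verified Lean document; each statement's English description precedes it below -/
import Mathlib

section
/- Proposition 3.3(1) (direct summands): If M and N are objects of 𝒜 such that M ⊕ N ∈ rG(𝒞), then M ∈ rG(𝒞). -/
open CategoryTheory CategoryTheory.Limits CategoryTheory.Abelian

universe w v u

namespace RGS

variable {𝒜 : Type u} [Category.{v} 𝒜] [Abelian 𝒜]

/-- `𝒞` is a (strictly full) additive subcategory of `𝒜`: it contains the zero objects and is
closed under binary biproducts and isomorphisms. -/
structure IsAdditiveSubcat (𝒞 : Set 𝒜) : Prop where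
  zero_mem : ∀ Z : 𝒜, IsZero Z → Z ∈ 𝒞
  biprod_mem : ∀ X Y : 𝒜, X ∈ 𝒞 → Y ∈ 𝒞 → (X ⊞ Y) ∈ 𝒞
  iso_mem : ∀ {X Y : 𝒜}, (X ≅ Y) → X ∈ 𝒞 → Y ∈ 𝒞

/-- The left orthogonal class `⊥𝒞`, consisting of the objects `A` with
`Ext^i (A, C) = 0` for all `i ≥ 1` and all `C ∈ 𝒞`. -/
def leftPerp [HasExt.{w} 𝒜] (𝒞 : Set 𝒜) : Set 𝒜 :=
  {A | ∀ C ∈ 𝒞, ∀ i : ℕ, Subsingleton (Abelian.Ext A C (i + 1))}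

/-- `𝒞` is self-orthogonal: `Ext^i (C, C') = 0` for all `i ≥ 1` and `C, C' ∈ 𝒞`. -/
def IsSelfOrthogonal [HasExt.{w} 𝒜] (𝒞 : Set 𝒜) : Prop :=
  ∀ C ∈ 𝒞, ∀ C' ∈ 𝒞, ∀ i : ℕ, Subsingleton (Abelian.Ext C C' (i + 1))

/-- An exact sequence `0 ⟶ A ⟶ X⁰ ⟶ X¹ ⟶ ⋯` in `𝒜` with all the `Xⁱ` in `𝒳`. -/
structure Coresolution (𝒳 : Set 𝒜) (A : 𝒜) where
  X : ℕ → 𝒜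
  d : ∀ n, X n ⟶ X (n + 1)
  ι : A ⟶ X 0
  mem : ∀ n, X n ∈ 𝒳
  mono_ι : Mono ι
  w0 : ι ≫ d 0 = 0
  w : ∀ n, d n ≫ d (n + 1) = 0
  exact0 : (ShortComplex.mk ι (d 0) w0).Exact
  exact : ∀ n, (ShortComplex.mk (d n) (d (n + 1)) (w n)).Exact

/-- The coresolution remains exact after applying `Hom(-, W)` for every `W ∈ 𝒲`. -/
def Coresolution.HomExact {𝒳 : Set 𝒜} {A : 𝒜} (R : Coresolution 𝒳 A) (𝒲 : Set 𝒜) : Prop :=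
  ∀ W ∈ 𝒲,
    (∀ f : A ⟶ W, ∃ g : R.X 0 ⟶ W, R.ι ≫ g = f) ∧
    (∀ g : R.X 0 ⟶ W, R.ι ≫ g = 0 → ∃ h : R.X 1 ⟶ W, R.d 0 ≫ h = g) ∧
    (∀ n, ∀ g : R.X (n + 1) ⟶ W, R.d n ≫ g = 0 → ∃ h : R.X (n + 2) ⟶ W, R.d (n + 1) ≫ h = g)

/-- `cores 𝒞̃`: the objects admitting an exact and `Hom(-,𝒞)`-exact coresolution by
objects of `𝒞`. -/
def coresTilde (𝒞 : Set 𝒜) : Set 𝒜 :=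
  {A | ∃ R : Coresolution 𝒞 A, R.HomExact 𝒞}

/-- The right Gorenstein subcategory `rG(𝒞) = ⊥𝒞 ∩ cores 𝒞̃`. -/
def rG [HasExt.{w} 𝒜] (𝒞 : Set 𝒜) : Set 𝒜 :=
  leftPerp.{w} 𝒞 ∩ coresTilde 𝒞

/-- `A` admits an exact resolution `0 ⟶ X_n ⟶ ⋯ ⟶ X_1 ⟶ X_0 ⟶ A ⟶ 0` with all `X_i ∈ 𝒳`
(of length exactly `n`). -/
def HasResLength (𝒳 : Set 𝒜) : 𝒜 → ℕ → Prop
  | A, 0 => ∃ X ∈ 𝒳, Nonempty (X ≅ A)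
  | A, n + 1 => ∃ (K X : 𝒜) (f : K ⟶ X) (g : X ⟶ A) (w : f ≫ g = 0),
      (ShortComplex.mk f g w).ShortExact ∧ X ∈ 𝒳 ∧ HasResLength 𝒳 K n

/-- `𝒳-pd A ≤ n`. -/
def pdLE (𝒳 : Set 𝒜) (A : 𝒜) (n : ℕ) : Prop := ∃ m ≤ n, HasResLength 𝒳 A m

/-- The class `𝒳-pd^{<∞}` of objects of finite `𝒳`-projective dimension. -/
def pdFin (𝒳 : Set 𝒜) : Set 𝒜 := {A | ∃ n : ℕ, HasResLength 𝒳 A n}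

/-- An unbounded exact sequence `⋯ ⟶ X_{n+1} ⟶ X_n ⟶ ⋯` (indexed by `ℤ`). -/
structure ZSequence (𝒜 : Type u) [Category.{v} 𝒜] [Abelian 𝒜] where
  X : ℤ → 𝒜
  d : ∀ n : ℤ, X (n + 1) ⟶ X n
  w : ∀ n : ℤ, d (n + 1) ≫ d n = 0
  exact : ∀ n : ℤ, (ShortComplex.mk (d (n + 1)) (d n) (w n)).Exact

/-- The unbounded sequence remains exact after applying `Hom(-, W)` for every `W ∈ 𝒲`. -/
def ZSequence.HomExact (S : ZSequence 𝒜) (𝒲 : Set 𝒜) : Prop :=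
  ∀ W ∈ 𝒲, ∀ n : ℤ, ∀ g : S.X (n + 1) ⟶ W, S.d (n + 1) ≫ g = 0 →
    ∃ h : S.X n ⟶ W, S.d n ≫ h = g

/-- `𝒞` is an injective cogenerator for `𝒳`. -/
def IsInjectiveCogen [HasExt.{w} 𝒜] (𝒞 𝒳 : Set 𝒜) : Prop :=
  𝒞 ⊆ 𝒳 ∧ (∀ X ∈ 𝒳, ∀ C ∈ 𝒞, ∀ i : ℕ, Subsingleton (Abelian.Ext X C (i + 1))) ∧
  (∀ X ∈ 𝒳, ∃ (C X' : 𝒜) (f : X ⟶ C) (g : C ⟶ X') (w : f ≫ g = 0),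
    (ShortComplex.mk f g w).ShortExact ∧ C ∈ 𝒞 ∧ X' ∈ 𝒳)

/-- `𝓟` is a projective generator for `𝒳`. -/
def IsProjectiveGen [HasExt.{w} 𝒜] (𝓟 𝒳 : Set 𝒜) : Prop :=
  𝓟 ⊆ 𝒳 ∧ (∀ P ∈ 𝓟, ∀ X ∈ 𝒳, ∀ i : ℕ, Subsingleton (Abelian.Ext P X (i + 1))) ∧
  (∀ X ∈ 𝒳, ∃ (X' P : 𝒜) (f : X' ⟶ P) (g : P ⟶ X) (w : f ≫ g = 0),
    (ShortComplex.mk f g w).ShortExact ∧ P ∈ 𝓟 ∧ X' ∈ 𝒳)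

/-- `(𝒰, 𝒱)` is a cotorsion pair: each class is the `Ext¹`-orthogonal of the other. -/
structure IsCotorsionPair [HasExt.{w} 𝒜] (𝒰 𝒱 : Set 𝒜) : Prop where
  mem_left_iff : ∀ A : 𝒜, A ∈ 𝒰 ↔ ∀ V ∈ 𝒱, Subsingleton (Abelian.Ext A V 1)
  mem_right_iff : ∀ A : 𝒜, A ∈ 𝒱 ↔ ∀ U ∈ 𝒰, Subsingleton (Abelian.Ext U A 1)

/-- The pair `(𝒰, 𝒱)` is hereditary: `Ext^i (U, V) = 0` for all `i ≥ 1`. -/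
def IsHereditaryPair [HasExt.{w} 𝒜] (𝒰 𝒱 : Set 𝒜) : Prop :=
  ∀ U ∈ 𝒰, ∀ V ∈ 𝒱, ∀ i : ℕ, Subsingleton (Abelian.Ext U V (i + 1))

/-- The pair `(𝒰, 𝒱)` has enough injectives. -/
def PairHasEnoughInjectives (𝒰 𝒱 : Set 𝒜) : Prop :=
  ∀ A : 𝒜, ∃ (V U : 𝒜) (f : A ⟶ V) (g : V ⟶ U) (w : f ≫ g = 0),
    (ShortComplex.mk f g w).ShortExact ∧ V ∈ 𝒱 ∧ U ∈ 𝒰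

/-! A class `𝒴` all of whose members embed `Hom(-,𝒞)`-monically into an object of `𝒞` with
cokernel again in `𝒴` lies in `cores 𝒞̃`: splicing these short exact sequences gives the required
coresolutions. Two such classes do the work. The `Hom(-,𝒞)`-exact extensions of objects of
`cores 𝒞̃` form one, by the horseshoe construction, whose exactness is the snake lemma; hence
`cores 𝒞̃` is closed under such extensions. The retracts of objects of `cores 𝒞̃` form the other:
if `B` is a retract of `G` via `i, r` and `j : G ⟶ D` starts a coresolution of `G`, then
`coker (i ≫ j)` is a retract of the cokernel of `(r ≫ i ≫ j, j) : G ⟶ D ⊞ D`, which is a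
`Hom(-,𝒞)`-exact extension of `coker j` by `D`. Finally `Ext (B, C)` is a retract of
`Ext (G, C)`, so `⊥𝒞` is closed under retracts too. -/

/-- For a monomorphism `i`, this says that `0 ⟶ A ⟶ B ⟶ coker i ⟶ 0` is `Hom(-,𝒞)`-exact. -/
def HomSurjective (𝒞 : Set 𝒜) {A B : 𝒜} (i : A ⟶ B) : Prop :=
  ∀ W ∈ 𝒞, ∀ f : A ⟶ W, ∃ g : B ⟶ W, i ≫ g = f

def HasCosyzygyIn (𝒞 𝒴 : Set 𝒜) (Y : 𝒜) : Prop :=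
  ∃ C ∈ 𝒞, ∃ i : Y ⟶ C, Mono i ∧ HomSurjective 𝒞 i ∧ cokernel i ∈ 𝒴

def extensions (𝒞 𝒳 : Set 𝒜) : Set 𝒜 :=
  ShortComplex.X₂ '' {S | S.ShortExact ∧ HomSurjective 𝒞 S.f ∧ S.X₁ ∈ 𝒳 ∧ S.X₃ ∈ 𝒳}

def retracts (𝒳 : Set 𝒜) : Set 𝒜 :=
  {B | ∃ G ∈ 𝒳, Nonempty (Retract B G)}

lemma exact_mk_comp_mono {X₁ X₂ X₃ X₄ : 𝒜} {f : X₁ ⟶ X₂} {g : X₂ ⟶ X₃} {w : f ≫ g = 0}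
    (hfg : (ShortComplex.mk f g w).Exact) (h : X₃ ⟶ X₄) [Mono h] :
    (ShortComplex.mk f (g ≫ h) (by simp [reassoc_of% w])).Exact := by
  let φ : ShortComplex.mk f g w ⟶ ShortComplex.mk f (g ≫ h) (by simp [reassoc_of% w]) :=
    { τ₁ := 𝟙 _, τ₂ := 𝟙 _, τ₃ := h }
  exact (ShortComplex.exact_iff_of_epi_of_isIso_of_mono φ).1 hfg

lemma exact_mk_epi_comp_iff {X₀ X₁ X₂ X₃ : 𝒜} {f : X₁ ⟶ X₂} {g : X₂ ⟶ X₃} (w : f ≫ g = 0)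
    (e : X₀ ⟶ X₁) [Epi e] :
    (ShortComplex.mk (e ≫ f) g (by simp [w])).Exact ↔ (ShortComplex.mk f g w).Exact := by
  let φ : ShortComplex.mk (e ≫ f) g (by simp [w]) ⟶ ShortComplex.mk f g w :=
    { τ₁ := e, τ₂ := 𝟙 _, τ₃ := 𝟙 _ }
  exact ShortComplex.exact_iff_of_epi_of_isIso_of_mono φ

namespace Coresolution

section Splice

variable {𝒳 : Set 𝒜} (Y C : ℕ → 𝒜) (i : ∀ n, Y n ⟶ C n) (p : ∀ n, C n ⟶ Y (n + 1))
  (w : ∀ n, i n ≫ p n = 0) (hS : ∀ n, (ShortComplex.mk (i n) (p n) (w n)).ShortExact)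

def splice (hC : ∀ n, C n ∈ 𝒳) : Coresolution 𝒳 (Y 0) where
  X := C
  d n := p n ≫ i (n + 1)
  ι := i 0
  mem := hC
  mono_ι := (hS 0).mono_f
  w0 := by simp [reassoc_of% (w 0)]
  w n := by simp [reassoc_of% (w (n + 1))]
  exact0 := by
    have := (hS 1).mono_f
    exact exact_mk_comp_mono (hS 0).exact (i 1)
  exact n := by
    have := (hS (n + 2)).mono_f
    have := (hS n).epi_g
    exact (exact_mk_epi_comp_iff _ (p n)).2 (exact_mk_comp_mono (hS (n + 1)).exact (i (n + 2)))

lemma splice_homExact {𝒲 : Set 𝒜} (hC : ∀ n, C n ∈ 𝒳) (hi : ∀ n, HomSurjective 𝒲 (i n)) :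
    (splice Y C i p w hS hC).HomExact 𝒲 := by
  intro W hW
  have lift : ∀ n (g : C n ⟶ W), i n ≫ g = 0 →
      ∃ h : C (n + 1) ⟶ W, (p n ≫ i (n + 1)) ≫ h = g := by
    intro n g hg
    have := (hS n).epi_g
    obtain ⟨g', rfl⟩ := (hS n).exact.desc' g hg
    obtain ⟨h, rfl⟩ := hi (n + 1) W hW g'
    exact ⟨h, Category.assoc _ _ _⟩
  refine ⟨hi 0 W hW, lift 0, fun n g hg => lift (n + 1) g ?_⟩
  have := (hS n).epi_g
  exact (cancel_epi (p n)).1 ((Category.assoc _ _ _).symm.trans (hg.trans comp_zero.symm))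

end Splice

variable {𝒳 : Set 𝒜} {A : 𝒜} (R : Coresolution 𝒳 A)

noncomputable def shift : Coresolution 𝒳 (cokernel R.ι) where
  X n := R.X (n + 1)
  d n := R.d (n + 1)
  ι := cokernel.desc R.ι (R.d 0) R.w0
  mem n := R.mem (n + 1)
  mono_ι := R.exact0.mono_cokernelDesc
  w0 := by ext; simp [R.w 0]
  w n := R.w (n + 1)
  exact0 := (exact_mk_epi_comp_iff _ (cokernel.π R.ι)).1 (by convert R.exact 0 using 2; simp)
  exact n := R.exact (n + 1)

lemma HomExact.shift {𝒲 : Set 𝒜} {R : Coresolution 𝒳 A} (hR : R.HomExact 𝒲) :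
    R.shift.HomExact 𝒲 := by
  intro W hW
  obtain ⟨-, hd₀, hd⟩ := hR W hW
  refine ⟨fun f => ?_, fun g hg => hd 0 g ?_, fun n => hd (n + 1)⟩
  · obtain ⟨g, hg⟩ := hd₀ (cokernel.π R.ι ≫ f) (by simp)
    exact ⟨g, by ext; exact (cokernel.π_desc_assoc R.ι (R.d 0) R.w0 g).trans hg⟩
  · rw [← cokernel.π_desc_assoc R.ι (R.d 0) R.w0 g]
    exact (cokernel.π R.ι ≫= hg).trans comp_zero

end Coresolution

variable {𝒞 : Set 𝒜}

theorem subset_coresTilde_of_forall_hasCosyzygyIn {𝒴 : Set 𝒜}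
    (h : ∀ Y ∈ 𝒴, HasCosyzygyIn 𝒞 𝒴 Y) : 𝒴 ⊆ coresTilde 𝒞 := by
  intro A hA
  choose C hC i hmono hsurj hcok using h
  let Y : ℕ → 𝒴 := fun n => n.rec ⟨A, hA⟩ fun _ Y => ⟨cokernel (i Y.1 Y.2), hcok Y.1 Y.2⟩
  have hS : ∀ n, (ShortComplex.mk (i (Y n).1 (Y n).2) (cokernel.π _)
      (cokernel.condition _)).ShortExact := fun n =>
    have := hmono (Y n).1 (Y n).2
    .mk' (ShortComplex.exact_of_g_is_cokernel _ (cokernelIsCokernel _)) inferInstance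
      inferInstance
  exact ⟨.splice (fun n => (Y n).1) (fun n => C _ (Y n).2) (fun n => i _ (Y n).2)
    (fun n => cokernel.π _) _ hS (fun n => hC _ (Y n).2),
    Coresolution.splice_homExact _ _ _ _ _ _ _ fun n => hsurj _ (Y n).2⟩

theorem hasCosyzygyIn_of_mem_coresTilde {A : 𝒜} (hA : A ∈ coresTilde 𝒞) :
    HasCosyzygyIn 𝒞 (coresTilde 𝒞) A := by
  obtain ⟨R, hR⟩ := hA
  exact ⟨R.X 0, R.mem 0, R.ι, R.mono_ι, fun W hW => (hR W hW).1, R.shift, hR.shift⟩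

theorem self_subset_coresTilde (h0 : ∀ Z : 𝒜, IsZero Z → Z ∈ 𝒞) : 𝒞 ⊆ coresTilde 𝒞 :=
  subset_coresTilde_of_forall_hasCosyzygyIn fun C hC =>
    ⟨C, hC, 𝟙 C, inferInstance, fun _ _ f => ⟨f, Category.id_comp f⟩,
      h0 _ (isZero_cokernel_of_epi _)⟩

theorem shortExact_cokernel_map {S₁ S₂ : ShortComplex 𝒜} (φ : S₁ ⟶ S₂)
    (h₁ : S₁.ShortExact) (h₂ : S₂.ShortExact) [Mono φ.τ₃] :
    (ShortComplex.mk (cokernel.map φ.τ₁ φ.τ₂ S₁.f S₂.f φ.comm₁₂)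
      (cokernel.map φ.τ₂ φ.τ₃ S₁.g S₂.g φ.comm₂₃) (by ext; simp)).ShortExact := by
  let D : ShortComplex.SnakeInput 𝒜 :=
    { L₀ := ShortComplex.mk (kernel.map φ.τ₁ φ.τ₂ S₁.f S₂.f φ.comm₁₂)
        (kernel.map φ.τ₂ φ.τ₃ S₁.g S₂.g φ.comm₂₃) (by ext; simp)
      L₁ := S₁
      L₂ := S₂
      L₃ := ShortComplex.mk (cokernel.map φ.τ₁ φ.τ₂ S₁.f S₂.f φ.comm₁₂)
        (cokernel.map φ.τ₂ φ.τ₃ S₁.g S₂.g φ.comm₂₃) (by ext; simp)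
      v₀₁ := { τ₁ := kernel.ι _, τ₂ := kernel.ι _, τ₃ := kernel.ι _ }
      v₁₂ := φ
      v₂₃ := { τ₁ := cokernel.π _, τ₂ := cokernel.π _, τ₃ := cokernel.π _ }
      h₀ := by
        apply ShortComplex.isLimitOfIsLimitπ <;>
          exact (KernelFork.isLimitMapConeEquiv _ _).2 (kernelIsKernel _)
      h₃ := by
        apply ShortComplex.isColimitOfIsColimitπ <;>
          exact (CokernelCofork.isColimitMapCoconeEquiv _ _).2 (cokernelIsCokernel _)
      L₁_exact := h₁.exact
      epi_L₁_g := h₁.epi_g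
      L₂_exact := h₂.exact
      mono_L₂_f := h₂.mono_f }
  have hδ : D.δ = 0 := (isZero_kernel_of_mono φ.τ₃).eq_of_src _ _
  have : Epi D.L₂.g := h₂.epi_g
  exact .mk' D.L₃_exact (D.L₂'_exact.mono_g hδ) D.epi_L₃_g

section Horseshoe

variable {S : ShortComplex 𝒜} {X Y : 𝒜} (a : S.X₂ ⟶ X) (b : S.X₃ ⟶ Y)

noncomputable abbrev toBiprod :
    S ⟶ ShortComplex.mk (biprod.inl : X ⟶ X ⊞ Y) biprod.snd biprod.inl_snd where
  τ₁ := S.f ≫ a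
  τ₂ := biprod.lift a (S.g ≫ b)
  τ₃ := b
  comm₁₂ := by ext <;> simp
  comm₂₃ := by simp

variable {a b}

lemma mono_toBiprod_τ₂ (hS : S.ShortExact) [Mono (S.f ≫ a)] [Mono b] :
    Mono (toBiprod a b).τ₂ := by
  have := hS.mono_f
  exact ShortComplex.mono_τ₂_of_exact_of_mono (toBiprod a b) hS.exact

lemma homSurjective_toBiprod_τ₂ (hS : S.ShortExact)
    (ha : HomSurjective 𝒞 (S.f ≫ a)) (hb : HomSurjective 𝒞 b) :
    HomSurjective 𝒞 (toBiprod a b).τ₂ := by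
  intro W hW f
  obtain ⟨gX, hgX⟩ := ha W hW (S.f ≫ f)
  have := hS.epi_g
  obtain ⟨u, hu⟩ := hS.exact.desc' (f - a ≫ gX) (by simp [← hgX])
  obtain ⟨gY, rfl⟩ := hb W hW u
  exact ⟨biprod.desc gX gY, by simp [hu]⟩

lemma homSurjective_cokernel_map_toBiprod (hS : S.ShortExact) (hb : HomSurjective 𝒞 b) :
    HomSurjective 𝒞 (cokernel.map (toBiprod a b).τ₁ (toBiprod a b).τ₂ S.f biprod.inl
      (toBiprod a b).comm₁₂) := by
  intro W hW f
  have := hS.epi_g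
  obtain ⟨t, ht⟩ := hS.exact.desc' (a ≫ cokernel.π (S.f ≫ a) ≫ f)
    (by rw [← Category.assoc, cokernel.condition_assoc, zero_comp])
  obtain ⟨h, hh⟩ := hb W hW (-t)
  refine ⟨cokernel.desc _ (biprod.desc (cokernel.π _ ≫ f) h) ?_, ?_⟩
  · simp [← ht, hh]
  · ext; simp

end Horseshoe

theorem hasCosyzygyIn_extensions (hbiprod : ∀ X Y : 𝒜, X ∈ 𝒞 → Y ∈ 𝒞 → (X ⊞ Y) ∈ 𝒞)
    {𝒳 : Set 𝒜} {S : ShortComplex 𝒜} (hS : S.ShortExact) (hf : HomSurjective 𝒞 S.f)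
    (h₁ : HasCosyzygyIn 𝒞 𝒳 S.X₁) (h₃ : HasCosyzygyIn 𝒞 𝒳 S.X₃) :
    HasCosyzygyIn 𝒞 (extensions 𝒞 𝒳) S.X₂ := by
  obtain ⟨C₁, hC₁, i₁, hi₁, hs₁, hK₁⟩ := h₁
  obtain ⟨C₃, hC₃, i₃, hi₃, hs₃, hK₃⟩ := h₃
  obtain ⟨a, rfl⟩ := hf C₁ hC₁ i₁
  exact ⟨C₁ ⊞ C₃, hbiprod _ _ hC₁ hC₃, (toBiprod a i₃).τ₂, mono_toBiprod_τ₂ hS,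
    homSurjective_toBiprod_τ₂ hS hs₁ hs₃, _,
    ⟨shortExact_cokernel_map _ hS (ShortComplex.Splitting.ofHasBinaryBiproduct C₁ C₃).shortExact,
      homSurjective_cokernel_map_toBiprod hS hs₃, hK₁, hK₃⟩, rfl⟩

theorem mem_coresTilde_of_shortExact (hbiprod : ∀ X Y : 𝒜, X ∈ 𝒞 → Y ∈ 𝒞 → (X ⊞ Y) ∈ 𝒞)
    {S : ShortComplex 𝒜} (hS : S.ShortExact) (hf : HomSurjective 𝒞 S.f)
    (h₁ : S.X₁ ∈ coresTilde 𝒞) (h₃ : S.X₃ ∈ coresTilde 𝒞) : S.X₂ ∈ coresTilde 𝒞 := by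
  refine subset_coresTilde_of_forall_hasCosyzygyIn (𝒴 := extensions 𝒞 (coresTilde 𝒞)) ?_
    ⟨S, ⟨hS, hf, h₁, h₃⟩, rfl⟩
  rintro _ ⟨S, ⟨hS, hf, h₁, h₃⟩, rfl⟩
  exact hasCosyzygyIn_extensions hbiprod hS hf (hasCosyzygyIn_of_mem_coresTilde h₁)
    (hasCosyzygyIn_of_mem_coresTilde h₃)

open ZeroObject in
theorem hasCosyzygyIn_retracts (h𝒞 : IsAdditiveSubcat 𝒞) {B G : 𝒜} (h : Retract B G)
    (hG : G ∈ coresTilde 𝒞) : HasCosyzygyIn 𝒞 (retracts (coresTilde 𝒞)) B := by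
  obtain ⟨D, hD, j, hj, hsj, hK⟩ := hasCosyzygyIn_of_mem_coresTilde hG
  let S := ShortComplex.mk (0 : 0 ⟶ G) (𝟙 G) (by simp)
  have hS : S.ShortExact :=
    (ShortComplex.Splitting.ofIsZeroOfIsIso S (isZero_zero _) inferInstance).shortExact
  let φ := toBiprod (S := S) (h.r ≫ h.i ≫ j) j
  have : IsIso (cokernel.π φ.τ₁) := cokernel.π_of_zero zero_comp
  have hZ : cokernel φ.τ₂ ∈ coresTilde 𝒞 :=
    mem_coresTilde_of_shortExact h𝒞.biprod_mem
      (shortExact_cokernel_map φ hS (ShortComplex.Splitting.ofHasBinaryBiproduct D D).shortExact)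
      (homSurjective_cokernel_map_toBiprod hS hsj)
      (self_subset_coresTilde h𝒞.zero_mem (h𝒞.iso_mem (asIso (cokernel.π φ.τ₁)) hD)) hK
  refine ⟨D, hD, h.i ≫ j, mono_comp _ _, fun W hW f => ?_, _, hZ, ⟨?_⟩⟩
  · obtain ⟨g, hg⟩ := hsj W hW (h.r ≫ f)
    exact ⟨g, by simp [hg]⟩
  · exact
      { i := cokernel.map (h.i ≫ j) φ.τ₂ h.i (biprod.lift (𝟙 D) (𝟙 D)) (by ext <;> simp [φ, S])
        r := cokernel.map φ.τ₂ (h.i ≫ j) h.r biprod.fst (by simp [φ])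
        retract := by ext; simp }

theorem mem_coresTilde_of_retract (h𝒞 : IsAdditiveSubcat 𝒞) {B G : 𝒜} (h : Retract B G)
    (hG : G ∈ coresTilde 𝒞) : B ∈ coresTilde 𝒞 := by
  refine subset_coresTilde_of_forall_hasCosyzygyIn (𝒴 := retracts (coresTilde 𝒞)) ?_
    ⟨G, hG, ⟨h⟩⟩
  rintro B ⟨G, hG, ⟨h⟩⟩
  exact hasCosyzygyIn_retracts h𝒞 h hG

theorem mem_leftPerp_of_retract [HasExt.{w} 𝒜] {B G : 𝒜} (h : Retract B G)
    (hG : G ∈ leftPerp.{w} 𝒞) : B ∈ leftPerp.{w} 𝒞 := by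
  intro C hC n
  have := hG C hC n
  have factor : ∀ e : Ext B C (n + 1),
      e = (Ext.mk₀ h.i).comp ((Ext.mk₀ h.r).comp e (zero_add _)) (zero_add _) := fun e => by
    rw [Ext.mk₀_comp_mk₀_assoc, h.retract, Ext.mk₀_id_comp]
  exact ⟨fun e₁ e₂ => by rw [factor e₁, factor e₂, Subsingleton.elim ((Ext.mk₀ h.r).comp e₁ _)]⟩

theorem mem_rG_of_retract [HasExt.{w} 𝒜] (h𝒞 : IsAdditiveSubcat 𝒞) {B G : 𝒜}
    (h : Retract B G) (hG : G ∈ rG.{w} 𝒞) : B ∈ rG.{w} 𝒞 :=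
  ⟨mem_leftPerp_of_retract h hG.1, mem_coresTilde_of_retract h𝒞 h hG.2⟩

/-- Proposition 3.3(1) (direct summands): `rG(𝒞)` is closed under direct summands. -/
theorem rG_closed_under_direct_summands {𝒜 : Type u} [Category.{v} 𝒜] [Abelian 𝒜] [HasExt.{w} 𝒜]
    {𝒞 : Set 𝒜} (h𝒞 : IsAdditiveSubcat 𝒞)
    {M N : 𝒜} (h : (M ⊞ N) ∈ rG 𝒞) :
    M ∈ rG 𝒞 :=
  mem_rG_of_retract h𝒞 { i := biprod.inl, r := biprod.fst } h

end RGS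
end

section
/- Theorem 3.6, (1)⇔(2): Assume 𝒞 is self-orthogonal. An object M of 𝒜 lies in rG(𝒞) if and only if M ∈ ⊥𝒞 and, for every subcategory 𝒟 of 𝒜 such that 𝒞 is an injective cogenerator for 𝒟, there exists an exact and Hom(−,𝒞)-exact sequence 0 → M → D⁰ → D¹ → ⋯ in 𝒜 with all Dⁱ ∈ 𝒟. -/
open CategoryTheory CategoryTheory.Limits CategoryTheory.Abelian

universe w v u

namespace RGS

variable {𝒜 : Type u} [Category.{v} 𝒜] [Abelian 𝒜]

def Coresolution.ofSubset {𝒳 𝒴 : Set 𝒜} {A : 𝒜} (h : 𝒳 ⊆ 𝒴) (R : Coresolution 𝒳 A) :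
    Coresolution 𝒴 A :=
  { R with mem := fun n => h (R.mem n) }

theorem shortExact_id_of_isZero {𝒦 : Type*} [Category 𝒦] [Preadditive 𝒦] [HasZeroObject 𝒦]
    {C Z : 𝒦} (hZ : IsZero Z) :
    (ShortComplex.mk (𝟙 C) (0 : C ⟶ Z) (by simp)).ShortExact :=
  (ShortComplex.Splitting.ofIsIsoOfIsZero _ (inferInstance : IsIso (𝟙 C)) hZ).shortExact

theorem isInjectiveCogen_self [HasExt.{w} 𝒜] {𝒞 : Set 𝒜} (hso : IsSelfOrthogonal.{w} 𝒞)
    {Z : 𝒜} (hZ : IsZero Z) (hZ𝒞 : Z ∈ 𝒞) : IsInjectiveCogen.{w} 𝒞 𝒞 :=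
  ⟨subset_rfl, hso, fun C hC => ⟨C, Z, 𝟙 C, 0, by simp, shortExact_id_of_isZero hZ, hC, hZ𝒞⟩⟩

/-- Theorem 3.6, (1)⇔(2): for self-orthogonal `𝒞`, `M ∈ rG(𝒞)` iff `M ∈ ⊥𝒞` and for every
subcategory `𝒟` for which `𝒞` is an injective cogenerator, `M` has an exact and
`Hom(-,𝒞)`-exact coresolution by objects of `𝒟`. -/
theorem mem_rG_iff_coresolutions_by_cogenerated {𝒜 : Type u} [Category.{v} 𝒜] [Abelian 𝒜]
    [HasExt.{w} 𝒜] {𝒞 : Set 𝒜} (h𝒞 : IsAdditiveSubcat 𝒞) (hso : IsSelfOrthogonal 𝒞) (M : 𝒜) :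
    M ∈ rG 𝒞 ↔ (M ∈ leftPerp 𝒞 ∧ ∀ 𝒟 : Set 𝒜, IsInjectiveCogen 𝒞 𝒟 →
      ∃ R : Coresolution 𝒟 M, R.HomExact 𝒞) := by
  constructor
  · rintro ⟨hperp, R, hR⟩
    -- `HomExact` only involves the maps of `R`, which `ofSubset` keeps.
    exact ⟨hperp, fun 𝒟 h𝒟 => ⟨R.ofSubset h𝒟.1, hR⟩⟩
  · rintro ⟨hperp, hcores⟩
    have hzero := isZero_zero 𝒜
    exact ⟨hperp, hcores 𝒞 (isInjectiveCogen_self hso hzero (h𝒞.zero_mem _ hzero))⟩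

end RGS
end

section
/- Proposition 4.5(2): Let (𝒰, 𝒱) be a hereditary cotorsion pair in 𝒜 with kernel 𝒞 = 𝒰 ∩ 𝒱, and assume (𝒰, 𝒱) has enough injectives. Then 𝒞-pd^{<∞} = 𝒰-pd^{<∞} ∩ 𝒱; that is, an object A of 𝒜 has finite 𝒞-projective dimension if and only if A ∈ 𝒱 and A has finite 𝒰-projective dimension. -/
/-!
Objects of finite `𝒞`-projective dimension lie in `𝒱`, because heredity makes `𝒱` closed under
cokernels of monomorphisms. Conversely, by induction on `n`, every `K` with `𝒰-pd K ≤ n` sits in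
a sequence `0 → K → V → U → 0` with `U ∈ 𝒰` and `𝒞-pd V ≤ n`: given `0 → K' → X → K → 0` and the
sequence `0 → K' → V' → U' → 0` for `K'`, the pushout `Y` of `X ← K' → V'` lies in `𝒰`; embed it
as `0 → Y → W → U → 0` with `W ∈ 𝒱` (so `W ∈ 𝒞`) and take `V = W / V'`. Finally, if `A ∈ 𝒱` has
`0 → K → X → A → 0` with `X ∈ 𝒰`, pushing out along `0 → K → V → U → 0` gives
`0 → V → Y → A → 0` with `Y ∈ 𝒰 ∩ 𝒱`, as both classes are closed under extensions.
-/

open CategoryTheory CategoryTheory.Limits CategoryTheory.Abelian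

universe w v u

namespace CategoryTheory

variable {𝒜 : Type u} [Category.{v} 𝒜] [Abelian 𝒜]

namespace IsPushout

variable {X₀ X₁ X₂ X₃ X₄ X₅ : 𝒜} {t : X₁ ⟶ X₂} {l : X₁ ⟶ X₃} {r : X₂ ⟶ X₄} {b : X₃ ⟶ X₄}

lemma shortExact (sq : IsPushout t l r b) {p : X₂ ⟶ X₅} {w : t ≫ p = 0}
    (hS : (ShortComplex.mk t p w).ShortExact) :
    (ShortComplex.mk b (sq.desc p 0 (by simp [w])) (sq.inr_desc _ _ _)).ShortExact := by
  have := hS.mono_f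
  have := hS.epi_g
  refine { exact := ?_
           mono_f := (MorphismProperty.monomorphisms 𝒜).of_isPushout sq.flip ‹Mono t›
           epi_g := epi_of_epi_fac (sq.inl_desc _ _ _) }
  rw [ShortComplex.exact_iff_exact_up_to_refinements]
  intro T (x : T ⟶ X₄) (hx : x ≫ sq.desc p 0 _ = 0)
  obtain ⟨T₁, π₁, _, x₂, x₃, hx₁⟩ := sq.hom_eq_add_up_to_refinements x
  have hx₂ : x₂ ≫ p = 0 := by
    have := hx₁ =≫ sq.desc p 0 (by simp [w])
    rwa [Category.assoc, hx, comp_zero, Preadditive.add_comp, Category.assoc, Category.assoc,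
      sq.inl_desc, sq.inr_desc, comp_zero, add_zero, eq_comm] at this
  obtain ⟨T₂, π₂, _, (y : T₂ ⟶ X₁), (hy : π₂ ≫ x₂ = y ≫ t)⟩ :=
    hS.exact.exact_up_to_refinements x₂ hx₂
  refine ⟨T₂, π₂ ≫ π₁, inferInstance, y ≫ l + π₂ ≫ x₃, ?_⟩
  simp [hx₁, reassoc_of% hy, sq.w]

lemma shortExact_comp (sq : IsPushout t l r b) [Mono t] {k : X₀ ⟶ X₁} {w : k ≫ l = 0}
    (hS : (ShortComplex.mk k l w).ShortExact) :
    (ShortComplex.mk (k ≫ t) r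
      (by rw [Category.assoc, sq.w, reassoc_of% w, zero_comp])).ShortExact := by
  have := hS.mono_f
  have := hS.epi_g
  refine { exact := ?_
           mono_f := mono_comp k t
           epi_g := (MorphismProperty.epimorphisms 𝒜).of_isPushout sq ‹Epi l› }
  rw [ShortComplex.exact_iff_exact_up_to_refinements]
  intro T (x : T ⟶ X₂) (hx : x ≫ r = 0)
  obtain ⟨T₁, π₁, _, (y : T₁ ⟶ X₁), hy : π₁ ≫ x ≫ biprod.inl = y ≫ biprod.lift t (-l)⟩ :=
    sq.exact_shortComplex.exact_up_to_refinements (x ≫ biprod.inl)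
      (by show (x ≫ biprod.inl) ≫ biprod.desc r b = 0; simpa using hx)
  have hyt : π₁ ≫ x = y ≫ t := by simpa using hy =≫ biprod.fst
  have hyl : y ≫ l = 0 := by simpa using (hy =≫ biprod.snd).symm
  obtain ⟨T₂, π₂, _, (z : T₂ ⟶ X₀), (hz : π₂ ≫ y = z ≫ k)⟩ :=
    hS.exact.exact_up_to_refinements y hyl
  exact ⟨T₂, π₂ ≫ π₁, inferInstance, z, by simp [hyt, reassoc_of% hz]⟩

end IsPushout

variable [HasExt.{w} 𝒜]

namespace Abelian.Ext

variable {A A' B : 𝒜} {n : ℕ}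

lemma subsingleton_of_iso_left (e : A ≅ A') [Subsingleton (Ext A B n)] :
    Subsingleton (Ext A' B n) :=
  @Equiv.subsingleton _ _ (((extFunctor n).mapIso e.op).app B).addCommGroupIsoToAddEquiv.toEquiv
    ‹Subsingleton (Ext A B n)›

lemma subsingleton_of_iso_right (e : A ≅ A') [Subsingleton (Ext B A n)] :
    Subsingleton (Ext B A' n) :=
  @Equiv.subsingleton _ _ ((extFunctorObj B n).mapIso e).addCommGroupIsoToAddEquiv.toEquiv.symm
    ‹Subsingleton (Ext B A n)›

end Abelian.Ext

namespace ShortComplex.ShortExact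

variable {S : ShortComplex 𝒜} (hS : S.ShortExact) {n : ℕ}
include hS

lemma subsingleton_ext_X₂_right (X : 𝒜) [Subsingleton (Ext X S.X₁ n)]
    [Subsingleton (Ext X S.X₃ n)] : Subsingleton (Ext X S.X₂ n) := by
  refine subsingleton_of_forall_eq 0 fun x => ?_
  obtain ⟨x₁, rfl⟩ := Ext.covariant_sequence_exact₂ X hS x (Subsingleton.elim _ _)
  rw [Subsingleton.elim x₁ 0, Ext.zero_comp]

lemma subsingleton_ext_X₃_right (X : 𝒜) [Subsingleton (Ext X S.X₂ n)]
    [Subsingleton (Ext X S.X₁ (n + 1))] : Subsingleton (Ext X S.X₃ n) := by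
  refine subsingleton_of_forall_eq 0 fun x => ?_
  obtain ⟨x₂, rfl⟩ := Ext.covariant_sequence_exact₃ X hS x rfl (Subsingleton.elim _ _)
  rw [Subsingleton.elim x₂ 0, Ext.zero_comp]

lemma subsingleton_ext_X₂_left (Y : 𝒜) [Subsingleton (Ext S.X₁ Y n)]
    [Subsingleton (Ext S.X₃ Y n)] : Subsingleton (Ext S.X₂ Y n) := by
  refine subsingleton_of_forall_eq 0 fun x => ?_
  obtain ⟨x₃, rfl⟩ := Ext.contravariant_sequence_exact₂ hS Y x (Subsingleton.elim _ _)
  rw [Subsingleton.elim x₃ 0, Ext.comp_zero]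

end ShortComplex.ShortExact

end CategoryTheory

namespace RGS

variable {𝒜 : Type u} [Category.{v} 𝒜] [Abelian 𝒜]

lemma HasResLength.mono {𝒳 𝒴 : Set 𝒜} (h : 𝒳 ⊆ 𝒴) :
    ∀ {n : ℕ} {A : 𝒜}, HasResLength 𝒳 A n → HasResLength 𝒴 A n
  | 0, _, ⟨X, hX, e⟩ => ⟨X, h hX, e⟩
  | _ + 1, _, ⟨K, X, f, g, w, hS, hX, hK⟩ => ⟨K, X, f, g, w, hS, h hX, HasResLength.mono h hK⟩

variable [HasExt.{w} 𝒜] {𝒰 𝒱 : Set 𝒜}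

namespace IsCotorsionPair

variable (hcp : IsCotorsionPair 𝒰 𝒱)
include hcp

lemma mem_left_of_iso {A A' : 𝒜} (e : A ≅ A') (h : A ∈ 𝒰) : A' ∈ 𝒰 :=
  (hcp.mem_left_iff _).2 fun V hV =>
    have := (hcp.mem_left_iff _).1 h V hV
    Ext.subsingleton_of_iso_left e

lemma mem_right_of_iso {A A' : 𝒜} (e : A ≅ A') (h : A ∈ 𝒱) : A' ∈ 𝒱 :=
  (hcp.mem_right_iff _).2 fun U hU =>
    have := (hcp.mem_right_iff _).1 h U hU
    Ext.subsingleton_of_iso_right e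

lemma mem_left_X₂ {S : ShortComplex 𝒜} (hS : S.ShortExact) (h₁ : S.X₁ ∈ 𝒰) (h₃ : S.X₃ ∈ 𝒰) :
    S.X₂ ∈ 𝒰 :=
  (hcp.mem_left_iff _).2 fun V hV =>
    have := (hcp.mem_left_iff _).1 h₁ V hV
    have := (hcp.mem_left_iff _).1 h₃ V hV
    hS.subsingleton_ext_X₂_left V

lemma mem_right_X₂ {S : ShortComplex 𝒜} (hS : S.ShortExact) (h₁ : S.X₁ ∈ 𝒱) (h₃ : S.X₃ ∈ 𝒱) :
    S.X₂ ∈ 𝒱 :=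
  (hcp.mem_right_iff _).2 fun U hU =>
    have := (hcp.mem_right_iff _).1 h₁ U hU
    have := (hcp.mem_right_iff _).1 h₃ U hU
    hS.subsingleton_ext_X₂_right U

lemma mem_right_X₃ (hh : IsHereditaryPair 𝒰 𝒱) {S : ShortComplex 𝒜} (hS : S.ShortExact)
    (h₁ : S.X₁ ∈ 𝒱) (h₂ : S.X₂ ∈ 𝒱) : S.X₃ ∈ 𝒱 :=
  (hcp.mem_right_iff _).2 fun U hU =>
    have := (hcp.mem_right_iff _).1 h₂ U hU
    have := hh U hU S.X₁ h₁ 1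
    hS.subsingleton_ext_X₃_right U

lemma mem_right_of_hasResLength_inter (hh : IsHereditaryPair 𝒰 𝒱) :
    ∀ {n : ℕ} {A : 𝒜}, HasResLength (𝒰 ∩ 𝒱) A n → A ∈ 𝒱
  | 0, _, ⟨_, hX, ⟨e⟩⟩ => hcp.mem_right_of_iso e hX.2
  | _ + 1, _, ⟨_, _, _, _, _, hS, hX, hK⟩ =>
    hcp.mem_right_X₃ hh hS (mem_right_of_hasResLength_inter hh hK) hX.2

lemma exists_shortExact_hasResLength_inter (hh : IsHereditaryPair 𝒰 𝒱)
    (hei : PairHasEnoughInjectives 𝒰 𝒱) :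
    ∀ {n : ℕ} {K : 𝒜}, HasResLength 𝒰 K n →
      ∃ (V U : 𝒜) (f : K ⟶ V) (g : V ⟶ U) (w : f ≫ g = 0),
        (ShortComplex.mk f g w).ShortExact ∧ U ∈ 𝒰 ∧ HasResLength (𝒰 ∩ 𝒱) V n
  | 0, K, ⟨X, hX, ⟨e⟩⟩ => by
    obtain ⟨V, U, f, g, w, hS, hV, hU⟩ := hei K
    have hVU : V ∈ 𝒰 := hcp.mem_left_X₂ hS (hcp.mem_left_of_iso e hX) hU
    exact ⟨V, U, f, g, w, hS, hU, V, ⟨hVU, hV⟩, ⟨Iso.refl V⟩⟩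
  | n + 1, K, ⟨K', X, i, p, w, hS, hX, hK'⟩ => by
    obtain ⟨V', U', f', g', w', hS', hU', hV'⟩ :=
      exists_shortExact_hasResLength_inter hh hei hK'
    let sq := IsPushout.of_hasPushout i f'
    have hY : pushout i f' ∈ 𝒰 := hcp.mem_left_X₂ (sq.flip.shortExact hS') hX hU'
    obtain ⟨W, U, g, s, w₂, hS₂, hW, hU⟩ := hei (pushout i f')
    have hWU : W ∈ 𝒰 := hcp.mem_left_X₂ hS₂ hY hU
    have := hS₂.mono_f
    -- the pushout of `W ← Y → K` is `W / V'`
    let sq₂ := IsPushout.of_hasPushout g (sq.desc p 0 (by simp [w]))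
    exact ⟨_, U, _, _, _, sq₂.shortExact hS₂, hU,
      V', W, _, _, _, sq₂.shortExact_comp (sq.shortExact hS), ⟨hWU, hW⟩, hV'⟩

lemma hasResLength_inter_of_mem_right (hh : IsHereditaryPair 𝒰 𝒱)
    (hei : PairHasEnoughInjectives 𝒰 𝒱) {n : ℕ} {A : 𝒜} (hA : A ∈ 𝒱)
    (hres : HasResLength 𝒰 A n) : HasResLength (𝒰 ∩ 𝒱) A n := by
  cases n with
  | zero =>
    obtain ⟨X, hX, ⟨e⟩⟩ := hres
    exact ⟨X, ⟨hX, hcp.mem_right_of_iso e.symm hA⟩, ⟨e⟩⟩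
  | succ n =>
    obtain ⟨K, X, i, p, w, hS, hX, hK⟩ := hres
    obtain ⟨V, U, f, g, w', hS', hU, hV⟩ := hcp.exists_shortExact_hasResLength_inter hh hei hK
    let sq := IsPushout.of_hasPushout i f
    have hYU : pushout i f ∈ 𝒰 := hcp.mem_left_X₂ (sq.flip.shortExact hS') hX hU
    have hYV : pushout i f ∈ 𝒱 :=
      hcp.mem_right_X₂ (sq.shortExact hS) (hcp.mem_right_of_hasResLength_inter hh hV) hA
    exact ⟨V, _, _, _, _, sq.shortExact hS, ⟨hYU, hYV⟩, hV⟩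

end IsCotorsionPair

/-- Proposition 4.5(2): if a hereditary cotorsion pair `(𝒰, 𝒱)` with kernel `𝒞 = 𝒰 ∩ 𝒱` has
enough injectives, then `𝒞-pd^{<∞} = 𝒰-pd^{<∞} ∩ 𝒱`. -/
theorem pdFin_kernel_eq_pdFinU_inter_V {𝒜 : Type u} [Category.{v} 𝒜] [Abelian 𝒜] [HasExt.{w} 𝒜]
    {𝒰 𝒱 : Set 𝒜} (hcp : IsCotorsionPair 𝒰 𝒱) (hh : IsHereditaryPair 𝒰 𝒱)
    (hei : PairHasEnoughInjectives 𝒰 𝒱) :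
    pdFin (𝒰 ∩ 𝒱) = pdFin 𝒰 ∩ 𝒱 := by
  ext A
  constructor
  · rintro ⟨n, hn⟩
    exact ⟨⟨n, hn.mono Set.inter_subset_left⟩, hcp.mem_right_of_hasResLength_inter hh hn⟩
  · rintro ⟨⟨n, hn⟩, hA⟩
    exact ⟨n, hcp.hasResLength_inter_of_mem_right hh hei hA hn⟩

end RGS
end

section
/- Proposition 4.5(3): Let (𝒰, 𝒱) be a hereditary cotorsion pair in 𝒜 with kernel 𝒞 = 𝒰 ∩ 𝒱, and assume (𝒰, 𝒱) has enough injectives. Then the class 𝒞-pd^{<∞} is closed under extensions, cokernels of monomorphisms and direct summands: for any short exact sequence 0 → L → M → N → 0 in 𝒜, if L and N have finite 𝒞-projective dimension then so does M, and if L and M have finite 𝒞-projective dimension then so does N; moreover if M ⊕ N has finite 𝒞-projective dimension then so does M. -/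
open CategoryTheory CategoryTheory.Limits CategoryTheory.Abelian

universe w v u

namespace RGS

variable {𝒜 : Type u} [Category.{v} 𝒜] [Abelian 𝒜]

/-! Every object of finite `𝒞`-projective dimension lies in `𝒱`, because `𝒱` is closed under
cokernels of monomorphisms when the pair is hereditary. Hence a short exact sequence whose third
term lies in `𝒞 ⊆ 𝒰` and whose first term has finite `𝒞`-projective dimension splits. Pulling
back along the first step of a `𝒞`-resolution reduces closure under extensions and under
cokernels of monomorphisms to each other with a shorter resolution, so both follow by a joint
induction. For summands, let `K ↪ C ↠ M ⊞ N` be the first step of a resolution and `K₁`, `K₂`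
the kernels of the composites `C ↠ M`, `C ↠ N`. All the relevant `Ext¹` vanish, so Schanuel's
argument gives `(K₁ ⊞ K₂) ⊞ C ≅ K ⊞ (C ⊞ C)`, and two applications of the induction hypothesis
on the length bound the resolution of `K₁`, hence of `M`. -/

section ShortExactSequences

lemma shortExact_biprod_inl_snd (A B : 𝒜) :
    (ShortComplex.mk (biprod.inl : A ⟶ A ⊞ B) biprod.snd biprod.inl_snd).ShortExact :=
  ShortComplex.Splitting.shortExact
    { r := biprod.fst, s := biprod.inr, f_r := biprod.inl_fst, s_g := biprod.inr_snd,
      id := biprod.total }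

lemma shortExact_biprod_inr_fst (A B : 𝒜) :
    (ShortComplex.mk (biprod.inr : B ⟶ A ⊞ B) biprod.fst biprod.inr_fst).ShortExact :=
  ShortComplex.Splitting.shortExact
    { r := biprod.snd, s := biprod.inl, f_r := biprod.inr_snd, s_g := biprod.inl_fst,
      id := by rw [add_comm, biprod.total] }

variable {A X X' Z : 𝒜}

open ZeroObject in
lemma shortExact_zero_of_iso (e : X ≅ A) :
    (ShortComplex.mk (0 : (0 : 𝒜) ⟶ X) e.hom zero_comp).ShortExact :=
  ShortComplex.Splitting.shortExact
    { r := 0, s := e.inv, f_r := (isZero_zero 𝒜).eq_of_src _ _, s_g := e.inv_hom_id,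
      id := by simp }

lemma shortExact_pullback_snd {f : A ⟶ X} {g : X ⟶ Z} {w : f ≫ g = 0}
    (hS : (ShortComplex.mk f g w).ShortExact) (g' : X' ⟶ Z) :
    (ShortComplex.mk (pullback.lift f 0 (by rw [w, zero_comp]) : A ⟶ pullback g g')
      (pullback.snd g g') (pullback.lift_snd _ _ _)).ShortExact := by
  have := hS.mono_f
  have := hS.epi_g
  have : Mono (pullback.lift f 0 (by rw [w, zero_comp]) : A ⟶ pullback g g') :=
    mono_of_mono_fac (pullback.lift_fst _ _ _)
  refine ShortComplex.ShortExact.mk' (ShortComplex.exact_of_f_is_kernel _ ?_) this inferInstance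
  refine KernelFork.IsLimit.ofι' _ _ fun k hk => ?_
  have hk' : (k ≫ pullback.fst g g') ≫ g = 0 := by
    rw [Category.assoc, pullback.condition, ← Category.assoc, hk, zero_comp]
  refine ⟨hS.exact.lift _ hk', pullback.hom_ext ?_ ?_⟩
  · dsimp
    rw [Category.assoc, pullback.lift_fst]
    exact hS.exact.lift_f _ hk'
  · dsimp
    rw [Category.assoc, pullback.lift_snd, comp_zero]
    exact hk.symm

lemma shortExact_pullback_fst {f' : A ⟶ X'} {g' : X' ⟶ Z} {w' : f' ≫ g' = 0}
    (hS : (ShortComplex.mk f' g' w').ShortExact) (g : X ⟶ Z) :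
    (ShortComplex.mk (pullback.lift 0 f' (by rw [w', zero_comp]) : A ⟶ pullback g g')
      (pullback.fst g g') (pullback.lift_fst _ _ _)).ShortExact := by
  refine ShortComplex.shortExact_of_iso ?_ (shortExact_pullback_snd hS g)
  refine ShortComplex.isoMk (Iso.refl _) (pullbackSymmetry g' g) (Iso.refl _) ?_ (by simp)
  apply pullback.hom_ext <;>
    simp only [Iso.refl_hom, Category.id_comp, Category.assoc, pullbackSymmetry_hom_comp_fst,
      pullbackSymmetry_hom_comp_snd, pullback.lift_fst, pullback.lift_snd]

lemma shortExact_pullback_fst_comp {i : A ⟶ Z} {q : Z ⟶ X'} {w : i ≫ q = 0}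
    (hS : (ShortComplex.mk i q w).ShortExact) (g : X ⟶ Z) [Epi g] :
    (ShortComplex.mk (pullback.fst g i) (g ≫ q)
      (by rw [← Category.assoc, pullback.condition, Category.assoc, w, comp_zero])).ShortExact := by
  have := hS.mono_f
  have := hS.epi_g
  refine ShortComplex.ShortExact.mk' (ShortComplex.exact_of_f_is_kernel _ ?_) inferInstance
    (epi_comp g q)
  refine KernelFork.IsLimit.ofι' _ _ fun k hk => ?_
  have hk' : (k ≫ g) ≫ q = 0 := by rw [Category.assoc]; exact hk
  exact ⟨pullback.lift k (hS.exact.lift _ hk') (hS.exact.lift_f _ hk').symm,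
    pullback.lift_fst _ _ _⟩

lemma shortExact_biprod_map {A' B B' : 𝒜} {f : A ⟶ X} {g : X ⟶ B} {w : f ≫ g = 0}
    {f' : A' ⟶ X'} {g' : X' ⟶ B'} {w' : f' ≫ g' = 0}
    (hS : (ShortComplex.mk f g w).ShortExact) (hS' : (ShortComplex.mk f' g' w').ShortExact) :
    (ShortComplex.mk (biprod.map f f') (biprod.map g g')
      (by ext <;> simp [w, w'])).ShortExact := by
  have := hS.mono_f
  have := hS.epi_g
  have := hS'.mono_f
  have := hS'.epi_g
  refine ShortComplex.ShortExact.mk' (ShortComplex.exact_of_f_is_kernel _ ?_) inferInstance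
    inferInstance
  refine KernelFork.IsLimit.ofι' _ _ fun k hk => ?_
  have hk₁ : (k ≫ biprod.fst) ≫ g = 0 := by
    rw [Category.assoc, ← biprod.map_fst g g', ← Category.assoc, hk, zero_comp]
  have hk₂ : (k ≫ biprod.snd) ≫ g' = 0 := by
    rw [Category.assoc, ← biprod.map_snd g g', ← Category.assoc, hk, zero_comp]
  refine ⟨biprod.lift (hS.exact.lift _ hk₁) (hS'.exact.lift _ hk₂), ?_⟩
  apply biprod.hom_ext
  · simp [hS.exact.lift_f]
  · simp [hS'.exact.lift_f]

end ShortExactSequences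

section ExtVanishing

variable [HasExt.{w} 𝒜]

lemma subsingleton_ext_of_retract_left {A B Y : 𝒜} {n : ℕ} (i : A ⟶ B) (r : B ⟶ A)
    (hir : i ≫ r = 𝟙 A) (h : Subsingleton (Ext B Y n)) : Subsingleton (Ext A Y n) := by
  have key (x : Ext A Y n) : (Ext.mk₀ i).comp ((Ext.mk₀ r).comp x (zero_add n)) (zero_add n) = x :=
    by rw [Ext.mk₀_comp_mk₀_assoc, hir, Ext.mk₀_id_comp]
  refine ⟨fun x y => ?_⟩
  rw [← key x, ← key y, Subsingleton.elim ((Ext.mk₀ r).comp x _)]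

lemma subsingleton_ext_of_retract_right {X A B : 𝒜} {n : ℕ} (i : A ⟶ B) (r : B ⟶ A)
    (hir : i ≫ r = 𝟙 A) (h : Subsingleton (Ext X B n)) : Subsingleton (Ext X A n) := by
  have key (x : Ext X A n) : (x.comp (Ext.mk₀ i) (add_zero n)).comp (Ext.mk₀ r) (add_zero n) = x :=
    by rw [Ext.comp_assoc_of_second_deg_zero, Ext.mk₀_comp_mk₀, hir, Ext.comp_mk₀_id]
  refine ⟨fun x y => ?_⟩
  rw [← key x, ← key y, Subsingleton.elim (x.comp (Ext.mk₀ i) _)]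

lemma subsingleton_ext_biprod_left {A B Y : 𝒜} {n : ℕ} (hA : Subsingleton (Ext A Y n))
    (hB : Subsingleton (Ext B Y n)) : Subsingleton (Ext (A ⊞ B) Y n) :=
  ⟨fun _ _ => Ext.biprod_ext (Subsingleton.elim _ _) (Subsingleton.elim _ _)⟩

lemma subsingleton_ext_X₂_of_shortExact {S : ShortComplex 𝒜} (hS : S.ShortExact) {X : 𝒜} {n : ℕ}
    (h₁ : Subsingleton (Ext X S.X₁ n)) (h₃ : Subsingleton (Ext X S.X₃ n)) :
    Subsingleton (Ext X S.X₂ n) := by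
  refine subsingleton_of_forall_eq 0 fun z => ?_
  obtain ⟨x, rfl⟩ := Ext.covariant_sequence_exact₂ X hS z (Subsingleton.elim _ _)
  rw [Subsingleton.elim x 0, Ext.zero_comp]

lemma subsingleton_ext_X₃_of_shortExact {S : ShortComplex 𝒜} (hS : S.ShortExact) {X : 𝒜} {n : ℕ}
    (h₂ : Subsingleton (Ext X S.X₂ n)) (h₁ : Subsingleton (Ext X S.X₁ (n + 1))) :
    Subsingleton (Ext X S.X₃ n) := by
  refine subsingleton_of_forall_eq 0 fun z => ?_
  obtain ⟨x, rfl⟩ := Ext.covariant_sequence_exact₃ X hS z rfl (Subsingleton.elim _ _)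
  rw [Subsingleton.elim x 0, Ext.zero_comp]

lemma exists_section_of_subsingleton_ext {S : ShortComplex 𝒜} (hS : S.ShortExact)
    (h : Subsingleton (Ext S.X₃ S.X₁ 1)) : ∃ s : S.X₃ ⟶ S.X₂, s ≫ S.g = 𝟙 S.X₃ := by
  obtain ⟨x, hx⟩ :=
    Ext.covariant_sequence_exact₃ S.X₃ hS (Ext.mk₀ (𝟙 S.X₃)) (zero_add 1) (Subsingleton.elim _ _)
  obtain ⟨s, rfl⟩ := (Ext.mk₀_bijective _ _).2 x
  rw [Ext.mk₀_comp_mk₀] at hx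
  exact ⟨s, (Ext.mk₀_bijective _ _).1 hx⟩

lemma nonempty_iso_biprod_of_subsingleton_ext {S : ShortComplex 𝒜} (hS : S.ShortExact)
    (h : Subsingleton (Ext S.X₃ S.X₁ 1)) : Nonempty (S.X₂ ≅ S.X₁ ⊞ S.X₃) := by
  obtain ⟨s, hs⟩ := exists_section_of_subsingleton_ext hS h
  exact ⟨(ShortComplex.Splitting.ofExactOfSection S hS.exact s hs hS.mono_f).isoBinaryBiproduct⟩

/-- Schanuel's lemma, relative to the vanishing of the two `Ext¹` that make the pullback
`P ×_Z P'` split both ways. -/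
lemma nonempty_iso_of_shortExact_of_subsingleton_ext {A P A' P' Z : 𝒜}
    {f : A ⟶ P} {g : P ⟶ Z} {w : f ≫ g = 0} {f' : A' ⟶ P'} {g' : P' ⟶ Z} {w' : f' ≫ g' = 0}
    (hS : (ShortComplex.mk f g w).ShortExact) (hS' : (ShortComplex.mk f' g' w').ShortExact)
    (h : Subsingleton (Ext P' A 1)) (h' : Subsingleton (Ext P A' 1)) :
    Nonempty (A ⊞ P' ≅ A' ⊞ P) := by
  obtain ⟨e⟩ := nonempty_iso_biprod_of_subsingleton_ext (shortExact_pullback_snd hS g') h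
  obtain ⟨e'⟩ := nonempty_iso_biprod_of_subsingleton_ext (shortExact_pullback_fst hS' g) h'
  exact ⟨e.symm ≪≫ e'⟩

end ExtVanishing

section Resolutions

variable {𝒳 : Set 𝒜}

lemma HasResLength.of_iso {A B : 𝒜} {n : ℕ} (hA : HasResLength 𝒳 A n) (e : A ≅ B) :
    HasResLength 𝒳 B n := by
  cases n with
  | zero =>
    obtain ⟨X, hX, ⟨e'⟩⟩ := hA
    exact ⟨X, hX, ⟨e' ≪≫ e⟩⟩
  | succ n =>
    obtain ⟨K, X, f, g, w, hS, hX, hK⟩ := hA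
    refine ⟨K, X, f, g ≫ e.hom, by rw [← Category.assoc, w, zero_comp], ?_, hX, hK⟩
    refine ShortComplex.shortExact_of_iso ?_ hS
    exact ShortComplex.isoMk (Iso.refl _) (Iso.refl _) e (by simp) (by simp)

lemma IsAdditiveSubcat.hasResLength_zero_iff (h𝒳 : IsAdditiveSubcat 𝒳) (A : 𝒜) :
    HasResLength 𝒳 A 0 ↔ A ∈ 𝒳 :=
  ⟨fun ⟨_, hX, ⟨e⟩⟩ => h𝒳.iso_mem e hX, fun hA => ⟨A, hA, ⟨Iso.refl A⟩⟩⟩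

open ZeroObject in
lemma HasResLength.succ (h𝒳 : IsAdditiveSubcat 𝒳) {A : 𝒜} :
    ∀ {n : ℕ}, HasResLength 𝒳 A n → HasResLength 𝒳 A (n + 1)
  | 0, ⟨X, hX, ⟨e⟩⟩ => ⟨0, X, 0, e.hom, zero_comp, shortExact_zero_of_iso e, hX,
      (h𝒳.hasResLength_zero_iff 0).2 (h𝒳.zero_mem 0 (isZero_zero 𝒜))⟩
  | _ + 1, ⟨K, X, f, g, w, hS, hX, hK⟩ => ⟨K, X, f, g, w, hS, hX, hK.succ h𝒳⟩

lemma HasResLength.mono_s17 (h𝒳 : IsAdditiveSubcat 𝒳) {A : 𝒜} {m n : ℕ} (hmn : m ≤ n)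
    (hA : HasResLength 𝒳 A m) : HasResLength 𝒳 A n := by
  induction hmn with
  | refl => exact hA
  | step _ ih => exact ih.succ h𝒳

lemma HasResLength.biprod (h𝒳 : IsAdditiveSubcat 𝒳) {A B : 𝒜} :
    ∀ {n : ℕ}, HasResLength 𝒳 A n → HasResLength 𝒳 B n → HasResLength 𝒳 (A ⊞ B) n
  | 0, ⟨X, hX, ⟨e⟩⟩, ⟨X', hX', ⟨e'⟩⟩ => ⟨X ⊞ X', h𝒳.biprod_mem X X' hX hX', ⟨biprod.mapIso e e'⟩⟩
  | _ + 1, ⟨K, X, _, _, _, hS, hX, hK⟩, ⟨K', X', _, _, _, hS', hX', hK'⟩ =>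
    ⟨K ⊞ K', X ⊞ X', _, _, _, shortExact_biprod_map hS hS', h𝒳.biprod_mem X X' hX hX',
      hK.biprod h𝒳 hK'⟩

end Resolutions

section CotorsionPairs

variable [HasExt.{w} 𝒜] {𝒰 𝒱 : Set 𝒜}

lemma IsCotorsionPair.mem_left_of_retract (hcp : IsCotorsionPair 𝒰 𝒱) {A B : 𝒜} (i : A ⟶ B)
    (r : B ⟶ A) (hir : i ≫ r = 𝟙 A) (hB : B ∈ 𝒰) : A ∈ 𝒰 :=
  (hcp.mem_left_iff A).2 fun V hV =>
    subsingleton_ext_of_retract_left i r hir ((hcp.mem_left_iff B).1 hB V hV)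

lemma IsCotorsionPair.mem_right_of_retract (hcp : IsCotorsionPair 𝒰 𝒱) {A B : 𝒜} (i : A ⟶ B)
    (r : B ⟶ A) (hir : i ≫ r = 𝟙 A) (hB : B ∈ 𝒱) : A ∈ 𝒱 :=
  (hcp.mem_right_iff A).2 fun U hU =>
    subsingleton_ext_of_retract_right i r hir ((hcp.mem_right_iff B).1 hB U hU)

lemma IsCotorsionPair.mem_right_X₂_of_shortExact (hcp : IsCotorsionPair 𝒰 𝒱) {S : ShortComplex 𝒜}
    (hS : S.ShortExact) (h₁ : S.X₁ ∈ 𝒱) (h₃ : S.X₃ ∈ 𝒱) : S.X₂ ∈ 𝒱 :=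
  (hcp.mem_right_iff _).2 fun U hU => subsingleton_ext_X₂_of_shortExact hS
    ((hcp.mem_right_iff _).1 h₁ U hU) ((hcp.mem_right_iff _).1 h₃ U hU)

lemma IsCotorsionPair.mem_right_X₃_of_shortExact (hcp : IsCotorsionPair 𝒰 𝒱)
    (hh : IsHereditaryPair 𝒰 𝒱) {S : ShortComplex 𝒜} (hS : S.ShortExact) (h₁ : S.X₁ ∈ 𝒱)
    (h₂ : S.X₂ ∈ 𝒱) : S.X₃ ∈ 𝒱 :=
  (hcp.mem_right_iff _).2 fun U hU => subsingleton_ext_X₃_of_shortExact hS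
    ((hcp.mem_right_iff _).1 h₂ U hU) (hh U hU _ h₁ 1)

lemma IsCotorsionPair.biprod_mem_right (hcp : IsCotorsionPair 𝒰 𝒱) {A B : 𝒜} (hA : A ∈ 𝒱)
    (hB : B ∈ 𝒱) : (A ⊞ B) ∈ 𝒱 :=
  hcp.mem_right_X₂_of_shortExact (shortExact_biprod_inl_snd A B) hA hB

lemma IsCotorsionPair.isAdditiveSubcat_inter (hcp : IsCotorsionPair 𝒰 𝒱) :
    IsAdditiveSubcat (𝒰 ∩ 𝒱) where
  zero_mem Z hZ :=
    have := hZ.projective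
    have := hZ.injective
    ⟨(hcp.mem_left_iff Z).2 fun V _ => Ext.subsingleton_of_projective Z V 0,
      (hcp.mem_right_iff Z).2 fun U _ => Ext.subsingleton_of_injective U Z 0⟩
  biprod_mem X Y hX hY :=
    ⟨(hcp.mem_left_iff _).2 fun V hV => subsingleton_ext_biprod_left
      ((hcp.mem_left_iff X).1 hX.1 V hV) ((hcp.mem_left_iff Y).1 hY.1 V hV),
      hcp.biprod_mem_right hX.2 hY.2⟩
  iso_mem e hX := ⟨hcp.mem_left_of_retract e.inv e.hom e.inv_hom_id hX.1,
    hcp.mem_right_of_retract e.inv e.hom e.inv_hom_id hX.2⟩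

lemma HasResLength.mem_right (hcp : IsCotorsionPair 𝒰 𝒱) (hh : IsHereditaryPair 𝒰 𝒱)
    {A : 𝒜} : ∀ {n : ℕ}, HasResLength (𝒰 ∩ 𝒱) A n → A ∈ 𝒱
  | 0, hA => ((hcp.isAdditiveSubcat_inter.hasResLength_zero_iff A).1 hA).2
  | _ + 1, ⟨_, _, _, _, _, hS, hX, hK⟩ =>
    hcp.mem_right_X₃_of_shortExact hh hS (hK.mem_right hcp hh) hX.2

lemma HasResLength.of_shortExact_of_mem_X₃ (hcp : IsCotorsionPair 𝒰 𝒱)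
    (hh : IsHereditaryPair 𝒰 𝒱) {S : ShortComplex 𝒜} (hS : S.ShortExact) {n : ℕ}
    (h₁ : HasResLength (𝒰 ∩ 𝒱) S.X₁ n) (h₃ : S.X₃ ∈ 𝒰 ∩ 𝒱) : HasResLength (𝒰 ∩ 𝒱) S.X₂ n := by
  have h𝒞 := hcp.isAdditiveSubcat_inter
  obtain ⟨e⟩ := nonempty_iso_biprod_of_subsingleton_ext hS
    ((hcp.mem_right_iff _).1 (h₁.mem_right hcp hh) _ h₃.1)
  exact (h₁.biprod h𝒞 (((h𝒞.hasResLength_zero_iff _).2 h₃).mono_s17 h𝒞 n.zero_le)).of_iso e.symm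

lemma mem_pdFin_X₃_of_hasResLength_X₁ (hcp : IsCotorsionPair 𝒰 𝒱) {n : ℕ}
    (hext : ∀ {S : ShortComplex 𝒜}, S.ShortExact → S.X₁ ∈ pdFin (𝒰 ∩ 𝒱) →
      HasResLength (𝒰 ∩ 𝒱) S.X₃ n → S.X₂ ∈ pdFin (𝒰 ∩ 𝒱))
    {S : ShortComplex 𝒜} (hS : S.ShortExact) (h₁ : HasResLength (𝒰 ∩ 𝒱) S.X₁ n)
    (h₂ : S.X₂ ∈ pdFin (𝒰 ∩ 𝒱)) : S.X₃ ∈ pdFin (𝒰 ∩ 𝒱) := by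
  obtain ⟨m, hm⟩ := h₂
  obtain ⟨K, C, _, v, _, hT, hC, hK⟩ := hm.succ hcp.isAdditiveSubcat_inter
  have := hT.epi_g
  obtain ⟨q, hq⟩ := hext (shortExact_pullback_snd hT S.f) ⟨m, hK⟩ h₁
  exact ⟨q + 1, _, C, _, _, _, shortExact_pullback_fst_comp hS v, hC, hq⟩

lemma mem_pdFin_X₂_of_hasResLength_X₃ (hcp : IsCotorsionPair 𝒰 𝒱) (hh : IsHereditaryPair 𝒰 𝒱)
    (n : ℕ) : ∀ {S : ShortComplex 𝒜}, S.ShortExact → S.X₁ ∈ pdFin (𝒰 ∩ 𝒱) →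
      HasResLength (𝒰 ∩ 𝒱) S.X₃ n → S.X₂ ∈ pdFin (𝒰 ∩ 𝒱) := by
  induction n with
  | zero =>
    rintro S hS ⟨l, hl⟩ h₃
    exact ⟨l, hl.of_shortExact_of_mem_X₃ hcp hh hS
      ((hcp.isAdditiveSubcat_inter.hasResLength_zero_iff _).1 h₃)⟩
  | succ n ih =>
    rintro S hS ⟨l, hl⟩ ⟨K, C, _, v, _, hT, hC, hK⟩
    have hP := hl.of_shortExact_of_mem_X₃ hcp hh (shortExact_pullback_snd hS v) hC
    exact mem_pdFin_X₃_of_hasResLength_X₁ hcp ih (shortExact_pullback_fst hT S.g) hK ⟨l, hP⟩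

lemma HasResLength.of_biprod_left (hcp : IsCotorsionPair 𝒰 𝒱) (hh : IsHereditaryPair 𝒰 𝒱)
    (n : ℕ) : ∀ {M N : 𝒜}, HasResLength (𝒰 ∩ 𝒱) (M ⊞ N) n → HasResLength (𝒰 ∩ 𝒱) M n := by
  have h𝒞 := hcp.isAdditiveSubcat_inter
  induction n with
  | zero =>
    intro M N h
    have hMN := (h𝒞.hasResLength_zero_iff _).1 h
    exact (h𝒞.hasResLength_zero_iff _).2
      ⟨hcp.mem_left_of_retract _ _ biprod.inl_fst hMN.1,
        hcp.mem_right_of_retract _ _ biprod.inl_fst hMN.2⟩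
  | succ n ih =>
    intro M N h
    have hMN := h.mem_right hcp hh
    obtain ⟨K, C, _, p, _, hT, hC, hK⟩ := h
    have := hT.epi_g
    have hK𝒱 := hK.mem_right hcp hh
    have hS₁ := shortExact_pullback_fst_comp (shortExact_biprod_inr_fst M N) p
    have hS₂ := shortExact_pullback_fst_comp (shortExact_biprod_inl_snd M N) p
    have hK₁ : pullback p biprod.inr ∈ 𝒱 := hcp.mem_right_X₂_of_shortExact
      (shortExact_pullback_snd hT biprod.inr) hK𝒱
      (hcp.mem_right_of_retract _ _ biprod.inr_snd hMN)
    have hK₂ : pullback p biprod.inl ∈ 𝒱 := hcp.mem_right_X₂_of_shortExact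
      (shortExact_pullback_snd hT biprod.inl) hK𝒱
      (hcp.mem_right_of_retract _ _ biprod.inl_fst hMN)
    obtain ⟨e⟩ := nonempty_iso_of_shortExact_of_subsingleton_ext hT
      (shortExact_biprod_map hS₁ hS₂)
      ((hcp.mem_right_iff _).1 hK𝒱 _ (h𝒞.biprod_mem C C hC hC).1)
      ((hcp.mem_right_iff _).1 (hcp.biprod_mem_right hK₁ hK₂) _ hC.1)
    have hCC := ((h𝒞.hasResLength_zero_iff _).2 (h𝒞.biprod_mem C C hC hC)).mono_s17 h𝒞 n.zero_le
    exact ⟨_, C, _, _, _, hS₁, hC, ih (ih ((hK.biprod h𝒞 hCC).of_iso e))⟩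

end CotorsionPairs

theorem pdFin_kernel_closure_properties_general {𝒜 : Type u} [Category.{v} 𝒜] [Abelian 𝒜] [HasExt.{w} 𝒜]
    {𝒰 𝒱 : Set 𝒜} (hcp : IsCotorsionPair 𝒰 𝒱) (hh : IsHereditaryPair 𝒰 𝒱) :
    (∀ {L M N : 𝒜} (f : L ⟶ M) (g : M ⟶ N) (w : f ≫ g = 0),
      (ShortComplex.mk f g w).ShortExact →
        (L ∈ pdFin (𝒰 ∩ 𝒱) → N ∈ pdFin (𝒰 ∩ 𝒱) → M ∈ pdFin (𝒰 ∩ 𝒱)) ∧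
        (L ∈ pdFin (𝒰 ∩ 𝒱) → M ∈ pdFin (𝒰 ∩ 𝒱) → N ∈ pdFin (𝒰 ∩ 𝒱))) ∧
    (∀ M N : 𝒜, (M ⊞ N) ∈ pdFin (𝒰 ∩ 𝒱) → M ∈ pdFin (𝒰 ∩ 𝒱)) := by
  refine ⟨fun f g w hS => ⟨?_, ?_⟩, fun M N ⟨n, h⟩ => ⟨n, h.of_biprod_left hcp hh n⟩⟩
  · rintro hL ⟨n, hN⟩
    exact mem_pdFin_X₂_of_hasResLength_X₃ hcp hh n hS hL hN
  · rintro ⟨n, hL⟩ hM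
    exact mem_pdFin_X₃_of_hasResLength_X₁ hcp (mem_pdFin_X₂_of_hasResLength_X₃ hcp hh n) hS hL hM

/-- Proposition 4.5(3): if a hereditary cotorsion pair `(𝒰, 𝒱)` with kernel `𝒞 = 𝒰 ∩ 𝒱` has
enough injectives, then `𝒞-pd^{<∞}` is closed under extensions, cokernels of monomorphisms
and direct summands. -/
theorem pdFin_kernel_closure_properties {𝒜 : Type u} [Category.{v} 𝒜] [Abelian 𝒜] [HasExt.{w} 𝒜]
    {𝒰 𝒱 : Set 𝒜} (hcp : IsCotorsionPair 𝒰 𝒱) (hh : IsHereditaryPair 𝒰 𝒱)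
    (hei : PairHasEnoughInjectives 𝒰 𝒱) :
    (∀ {L M N : 𝒜} (f : L ⟶ M) (g : M ⟶ N) (w : f ≫ g = 0),
      (ShortComplex.mk f g w).ShortExact →
        (L ∈ pdFin (𝒰 ∩ 𝒱) → N ∈ pdFin (𝒰 ∩ 𝒱) → M ∈ pdFin (𝒰 ∩ 𝒱)) ∧
        (L ∈ pdFin (𝒰 ∩ 𝒱) → M ∈ pdFin (𝒰 ∩ 𝒱) → N ∈ pdFin (𝒰 ∩ 𝒱))) ∧
    (∀ M N : 𝒜, (M ⊞ N) ∈ pdFin (𝒰 ∩ 𝒱) → M ∈ pdFin (𝒰 ∩ 𝒱)) :=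
  pdFin_kernel_closure_properties_general hcp hh

end RGS
end
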